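/- Fix an integer d ≥ 2. There exists an absolutely continuous probability measure ρ on ℝ^d, supported in the closed unit ball B(0,1) and whose density with respect to Lebesgue measure is bounded below on B(0,1) by a positive constant, with the following property: for every R > 0, C > 0, α > 0 and p ≥ 1, there exist Borel probability measures μ and ν supported in the closed ball B(0,R), Borel maps T, S : ℝ^d → ℝ^d, and a coupling π of μ and ν, such that (i) the pushforward of ρ by T equals μ and the pushforward of ρ by S equals ν; (ii) T minimizes ∫ |x − T'(x)|² dρ among all Borel maps T' pushing ρ forward to μ, and S minimizes ∫ |x − S'(x)|² dρ among all Borel maps S' pushing ρ forward to ν; (iii) ∫ |T(x) − S(x)|² dρ(x) > C² · (∫ |x − y|^p dπ(x, y))^{2α/p}. In particular, since the p-Wasserstein distance W_p(μ, ν) is at most (∫ |x − y|^p dπ)^{1/p}, the stability inequality ‖T_μ − T_ν‖_{L²(ρ)} ≤ C·W_p(μ, ν)^α for optimal transport maps with source ρ fails for every choice of C, α > 0 and p ≥ 1. -/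

import Mathlib

open MeasureTheory Metric
open scoped ENNReal

noncomputable def proj2 {d : ℕ} (b : EuclideanSpace ℝ (Fin d)) (x : EuclideanSpace ℝ (Fin d)) :
    EuclideanSpace ℝ (Fin d) := if 0 < (inner ℝ x b : ℝ) then b else -b

lemma proj2_measurable {d : ℕ} (b : EuclideanSpace ℝ (Fin d)) : Measurable (proj2 b) := by
  apply Measurable.ite _ measurable_const measurable_const
  have h : Continuous fun x : EuclideanSpace ℝ (Fin d) => (inner ℝ x b : ℝ) :=
    continuous_id.inner continuous_const
  exact measurableSet_lt measurable_const h.measurable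

lemma dist_proj2_le {d : ℕ} (b x y : EuclideanSpace ℝ (Fin d)) (hy : y = b ∨ y = -b) :
    dist x (proj2 b x) ≤ dist x y := by
  have hb : ‖x - b‖ ^ 2 = ‖x‖ ^ 2 - 2 * (inner ℝ x b : ℝ) + ‖b‖ ^ 2 := norm_sub_sq_real x b
  have hnb : ‖x - -b‖ ^ 2 = ‖x‖ ^ 2 + 2 * (inner ℝ x b : ℝ) + ‖b‖ ^ 2 := by
    rw [sub_neg_eq_add, norm_add_sq_real]
  unfold proj2
  rcases hy with rfl | rfl
  · split_ifs with h
    · exact le_refl _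
    · push_neg at h
      rw [dist_eq_norm, dist_eq_norm]
      nlinarith [norm_nonneg (x - y), norm_nonneg (x - -y)]
  · split_ifs with h
    · rw [dist_eq_norm, dist_eq_norm]
      nlinarith [norm_nonneg (x - b), norm_nonneg (x - -b)]
    · exact le_refl _

lemma proj2_opt {d : ℕ} (ρ : Measure (EuclideanSpace ℝ (Fin d))) (b : EuclideanSpace ℝ (Fin d))
    (T' : EuclideanSpace ℝ (Fin d) → EuclideanSpace ℝ (Fin d)) (hT' : Measurable T')
    (h : ρ.map T' = ρ.map (proj2 b)) :
    ∫⁻ x, ENNReal.ofReal (dist x (proj2 b x) ^ 2) ∂ρ ≤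
      ∫⁻ x, ENNReal.ofReal (dist x (T' x) ^ 2) ∂ρ := by
  have hmeas : MeasurableSet ({b, -b}ᶜ : Set (EuclideanSpace ℝ (Fin d))) := by
    measurability
  have h0 : ρ.map (proj2 b) ({b, -b}ᶜ) = 0 := by
    rw [Measure.map_apply (proj2_measurable b) hmeas]
    convert measure_empty (μ := ρ)
    ext x
    simp only [Set.mem_preimage, Set.mem_compl_iff, Set.mem_insert_iff, Set.mem_singleton_iff,
      Set.mem_empty_iff_false, iff_false, not_not, proj2]
    split_ifs <;> simp
  have h1 : ρ {x | ¬ (T' x = b ∨ T' x = -b)} = 0 := by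
    have h2 := Measure.map_apply (μ := ρ) hT' hmeas
    rw [h, h0] at h2
    rw [show {x | ¬ (T' x = b ∨ T' x = -b)} = T' ⁻¹' {b, -b}ᶜ by ext x; simp]
    exact h2.symm
  refine lintegral_mono_ae ?_
  rw [ae_iff]
  refine measure_mono_null (fun x hx => ?_) h1
  simp only [Set.mem_setOf_eq] at hx ⊢
  intro hmem
  exact hx (ENNReal.ofReal_le_ofReal
    (pow_le_pow_left₀ dist_nonneg (dist_proj2_le b x (T' x) hmem) 2))

noncomputable def refl1 (d : ℕ) (i : Fin d) :
    EuclideanSpace ℝ (Fin d) ≃ₗᵢ[ℝ] EuclideanSpace ℝ (Fin d) :=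
  LinearIsometryEquiv.piLpCongrRight 2
    (fun j => if j = i then LinearIsometryEquiv.neg ℝ else LinearIsometryEquiv.refl ℝ ℝ)

lemma refl1_apply (d : ℕ) (i : Fin d) (x : EuclideanSpace ℝ (Fin d)) (j : Fin d) :
    refl1 d i x j = if j = i then -(x j) else x j := by
  simp only [refl1, LinearIsometryEquiv.piLpCongrRight_apply]
  by_cases h : j = i
  · subst h; simp
  · simp [h]

lemma refl1_invol (d : ℕ) (i : Fin d) (x : EuclideanSpace ℝ (Fin d)) :
    refl1 d i (refl1 d i x) = x := by
  ext j
  rw [refl1_apply, refl1_apply]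
  by_cases h : j = i <;> simp [h]

example (d : ℕ) (i : Fin d) :
    MeasurePreserving (⇑(refl1 d i)) (volume : Measure (EuclideanSpace ℝ (Fin d))) volume :=
  (refl1 d i).measurePreserving

-- coordinate vs dist
lemma coord_dist_le {d : ℕ} (x y : EuclideanSpace ℝ (Fin d)) (i : Fin d) :
    |x i - y i| ≤ dist x y := by
  rw [EuclideanSpace.dist_eq, show |x i - y i| = Real.sqrt ((x i - y i) ^ 2) by
    rw [Real.sqrt_sq_eq_abs]]
  apply Real.sqrt_le_sqrt
  have h := Finset.single_le_sum (f := fun j => dist (x j) (y j) ^ 2)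
    (fun j _ => sq_nonneg _) (Finset.mem_univ i)
  simpa [Real.dist_eq, sq_abs] using h

-- PiLp pointwise ops
example (d : ℕ) (x y : EuclideanSpace ℝ (Fin d)) (j : Fin d) : (x + y) j = x j + y j := rfl
example (d : ℕ) (x : EuclideanSpace ℝ (Fin d)) (j : Fin d) : (-x) j = -(x j) := rfl
example (d : ℕ) (x y : EuclideanSpace ℝ (Fin d)) (j : Fin d) : (x - y) j = x j - y j := rfl

lemma choose_k (R C α : ℝ) (hR : 0 < R) (hC : 0 < C) (hα : 0 < α) :
    ∃ k : ℕ, 2 ≤ k ∧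
      C ^ 2 * (R * (8 * ((2:ℝ) ^ (k ^ 2))⁻¹)) ^ (2 * α) < R ^ 2 * ((2:ℝ) ^ (k + 2))⁻¹ := by
  have h8R : (0:ℝ) < 8 * R := by linarith
  set D : ℝ := R ^ 2 / (C ^ 2 * (8 * R) ^ (2 * α)) with hDdef
  have hD : 0 < D := div_pos (by positivity) (by positivity)
  obtain ⟨N, hN⟩ := exists_pow_lt_of_lt_one hD (by norm_num : (2:ℝ)⁻¹ < 1)
  obtain ⟨M, hM⟩ := exists_nat_ge α⁻¹
  refine ⟨N + M + 2, by omega, ?_⟩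
  set k : ℕ := N + M + 2 with hk
  have hkN : ((N:ℝ) + 2) ≤ (k:ℝ) := by
    have : (M:ℝ) ≥ 0 := Nat.cast_nonneg M
    push_cast [hk]; linarith
  have hαk : 1 ≤ α * (k:ℝ) := by
    have h1 : α⁻¹ ≤ (M:ℝ) := hM
    have h2 : (M:ℝ) ≤ (k:ℝ) := by push_cast [hk]; linarith [(Nat.cast_nonneg N : (0:ℝ) ≤ (N:ℝ))]
    have := mul_le_mul_of_nonneg_left h1 hα.le
    rw [mul_inv_cancel₀ hα.ne'] at this
    nlinarith
  have hkpos : (0:ℝ) ≤ (k:ℝ) := Nat.cast_nonneg k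
  have hexp : (N:ℝ) + ((k:ℝ) + 2) ≤ 2 * α * (k:ℝ) ^ 2 := by nlinarith
  -- rewrite the δ part as rpow
  have hb1 : ((2:ℝ) ^ (k ^ 2 : ℕ))⁻¹ = (2:ℝ) ^ (-((k:ℝ) ^ 2)) := by
    rw [← Real.rpow_natCast 2 (k ^ 2), ← Real.rpow_neg (by norm_num)]
    push_cast
    ring_nf
  have hb2 : ((2:ℝ) ^ (k + 2 : ℕ))⁻¹ = (2:ℝ) ^ (-((k:ℝ) + 2)) := by
    rw [← Real.rpow_natCast 2 (k + 2), ← Real.rpow_neg (by norm_num)]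
    push_cast
    ring_nf
  have key : (2:ℝ) ^ (-(2 * α * (k:ℝ) ^ 2)) < D * (2:ℝ) ^ (-((k:ℝ) + 2)) := by
    have hmono : (2:ℝ) ^ (-(2 * α * (k:ℝ) ^ 2)) ≤ (2:ℝ) ^ (-((N:ℝ) + ((k:ℝ) + 2))) := by
      apply Real.rpow_le_rpow_of_exponent_le (by norm_num)
      linarith
    have hsplit : (2:ℝ) ^ (-((N:ℝ) + ((k:ℝ) + 2)))
        = (2:ℝ) ^ (-(N:ℝ)) * (2:ℝ) ^ (-((k:ℝ) + 2)) := by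
      rw [← Real.rpow_add (by norm_num)]
      ring_nf
    have hNval : (2:ℝ) ^ (-(N:ℝ)) < D := by
      rw [Real.rpow_neg (by norm_num), Real.rpow_natCast, ← inv_pow]
      exact hN
    calc (2:ℝ) ^ (-(2 * α * (k:ℝ) ^ 2)) ≤ (2:ℝ) ^ (-(N:ℝ)) * (2:ℝ) ^ (-((k:ℝ) + 2)) := by
            rw [← hsplit]; exact hmono
      _ < D * (2:ℝ) ^ (-((k:ℝ) + 2)) :=
            mul_lt_mul_of_pos_right hNval (Real.rpow_pos_of_pos (by norm_num) _)
  -- now expand LHS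
  have hLHS : C ^ 2 * (R * (8 * ((2:ℝ) ^ (k ^ 2))⁻¹)) ^ (2 * α)
      = (C ^ 2 * (8 * R) ^ (2 * α)) * (2:ℝ) ^ (-(2 * α * (k:ℝ) ^ 2)) := by
    rw [hb1]
    rw [show R * (8 * (2:ℝ) ^ (-((k:ℝ) ^ 2))) = (8 * R) * (2:ℝ) ^ (-((k:ℝ) ^ 2)) by ring]
    rw [Real.mul_rpow h8R.le (Real.rpow_pos_of_pos (by norm_num) _).le]
    rw [← Real.rpow_mul (by norm_num : (0:ℝ) ≤ 2)]
    ring_nf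
  rw [hLHS, hb2]
  have hfact : C ^ 2 * (8 * R) ^ (2 * α) * D = R ^ 2 := by
    rw [hDdef]
    field_simp
  calc (C ^ 2 * (8 * R) ^ (2 * α)) * (2:ℝ) ^ (-(2 * α * (k:ℝ) ^ 2))
      < (C ^ 2 * (8 * R) ^ (2 * α)) * (D * (2:ℝ) ^ (-((k:ℝ) + 2))) := by
        apply mul_lt_mul_of_pos_left key (by positivity)
    _ = R ^ 2 * (2:ℝ) ^ (-((k:ℝ) + 2)) := by rw [← hfact]; ring
noncomputable def wpt (d : ℕ) (i1 : Fin d) : EuclideanSpace ℝ (Fin d) :=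
  EuclideanSpace.single i1 (1/2 : ℝ)

noncomputable def Kset (d : ℕ) (i0 i1 : Fin d) (k : ℕ) : Set (EuclideanSpace ℝ (Fin d)) :=
  {x | |x i0| ≤ ((2:ℝ) ^ (k ^ 2))⁻¹} ∩
    (closedBall (wpt d i1) 4⁻¹ ∪ closedBall (-(wpt d i1)) 4⁻¹)

lemma Kset_meas (d : ℕ) (i0 i1 : Fin d) (k : ℕ) : MeasurableSet (Kset d i0 i1 k) := by
  apply MeasurableSet.inter
  · have hm : Measurable fun x : EuclideanSpace ℝ (Fin d) => x i0 := (measurable_pi_apply i0).comp (WithLp.measurable_ofLp 2 _)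
    exact measurableSet_le hm.abs measurable_const
  · exact (measurableSet_closedBall.union measurableSet_closedBall)

lemma Kset_subset (d : ℕ) (i0 i1 : Fin d) (k : ℕ) :
    Kset d i0 i1 k ⊆ closedBall (0 : EuclideanSpace ℝ (Fin d)) 1 := by
  rintro x ⟨-, hx⟩
  have hw : ‖wpt d i1‖ = 1/2 := by
    rw [wpt, EuclideanSpace.norm_single]; norm_num
  rcases hx with hx | hx <;> rw [mem_closedBall] at hx ⊢
  · calc dist x 0 ≤ dist x (wpt d i1) + dist (wpt d i1) 0 := dist_triangle _ _ _
      _ ≤ 4⁻¹ + 1/2 := by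
          apply add_le_add hx
          rw [dist_zero_right, hw]
      _ ≤ 1 := by norm_num
  · calc dist x 0 ≤ dist x (-(wpt d i1)) + dist (-(wpt d i1)) 0 := dist_triangle _ _ _
      _ ≤ 4⁻¹ + 1/2 := by
          apply add_le_add hx
          rw [dist_zero_right, norm_neg, hw]
      _ ≤ 1 := by norm_num

lemma Kset_vol_pos (d : ℕ) (i0 i1 : Fin d) (hne : i0 ≠ i1) (k : ℕ) :
    0 < volume (Kset d i0 i1 k) := by
  have hδ : (0:ℝ) < ((2:ℝ) ^ (k ^ 2))⁻¹ := by positivity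
  set r : ℝ := min (((2:ℝ) ^ (k ^ 2))⁻¹) 4⁻¹ with hr
  have hrpos : 0 < r := lt_min hδ (by norm_num)
  have hsub : ball (wpt d i1) r ⊆ Kset d i0 i1 k := by
    intro x hx
    rw [mem_ball] at hx
    constructor
    · have h1 : |x i0 - (wpt d i1) i0| ≤ dist x (wpt d i1) := coord_dist_le _ _ _
      have h2 : (wpt d i1) i0 = 0 := by
        rw [wpt, EuclideanSpace.single_apply, if_neg hne]
      rw [h2, sub_zero] at h1
      exact le_of_lt (lt_of_le_of_lt h1 (lt_of_lt_of_le hx (min_le_left _ _)))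
    · left
      exact le_of_lt (lt_of_lt_of_le hx (min_le_right _ _))
  calc (0:ℝ≥0∞) < volume (ball (wpt d i1) r) := measure_ball_pos _ _ hrpos
    _ ≤ volume (Kset d i0 i1 k) := measure_mono hsub

lemma Kset_vol_lt_top (d : ℕ) (i0 i1 : Fin d) (k : ℕ) :
    volume (Kset d i0 i1 k) < ⊤ :=
  lt_of_le_of_lt (measure_mono (Kset_subset d i0 i1 k)) measure_closedBall_lt_top

noncomputable def gden (d : ℕ) (i0 i1 : Fin d) : EuclideanSpace ℝ (Fin d) → ℝ≥0∞ :=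
  fun x =>
    (closedBall (0 : EuclideanSpace ℝ (Fin d)) 1).indicator
      (fun _ => (2 * volume (closedBall (0 : EuclideanSpace ℝ (Fin d)) 1))⁻¹) x +
    ∑' k : ℕ, (Kset d i0 i1 k).indicator
      (fun _ => ((2:ℝ≥0∞) ^ (k + 2))⁻¹ / volume (Kset d i0 i1 k)) x

lemma gden_meas (d : ℕ) (i0 i1 : Fin d) : Measurable (gden d i0 i1) := by
  apply Measurable.add
  · exact measurable_const.indicator measurableSet_closedBall
  · exact Measurable.ennreal_tsum fun k => measurable_const.indicator (Kset_meas d i0 i1 k)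

lemma VB_pos (d : ℕ) : 0 < volume (closedBall (0 : EuclideanSpace ℝ (Fin d)) 1) :=
  lt_of_lt_of_le (measure_ball_pos _ _ one_pos) (measure_mono ball_subset_closedBall)

lemma gden_integral (d : ℕ) (i0 i1 : Fin d) (hne : i0 ≠ i1) :
    ∫⁻ x, gden d i0 i1 x = 1 := by
  set VB := volume (closedBall (0 : EuclideanSpace ℝ (Fin d)) 1) with hVB
  have hVB0 : VB ≠ 0 := (VB_pos d).ne'
  have hVBt : VB ≠ ⊤ := measure_closedBall_lt_top.ne
  simp only [gden]
  rw [lintegral_add_left (measurable_const.indicator measurableSet_closedBall)]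
  have h1 : ∫⁻ x, (closedBall (0 : EuclideanSpace ℝ (Fin d)) 1).indicator
      (fun _ => (2 * VB)⁻¹) x = 2⁻¹ := by
    rw [lintegral_indicator measurableSet_closedBall, setLIntegral_const, ← hVB]
    rw [ENNReal.mul_inv (Or.inl (by norm_num)) (Or.inl (by norm_num))]
    rw [mul_assoc, ENNReal.inv_mul_cancel hVB0 hVBt, mul_one]
  rw [h1]
  have h2 : ∫⁻ x, ∑' k : ℕ, (Kset d i0 i1 k).indicator
      (fun _ => ((2:ℝ≥0∞) ^ (k + 2))⁻¹ / volume (Kset d i0 i1 k)) x = 2⁻¹ := by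
    rw [lintegral_tsum (fun k =>
      (measurable_const.indicator (Kset_meas d i0 i1 k)).aemeasurable)]
    have heach : ∀ k : ℕ, ∫⁻ x, (Kset d i0 i1 k).indicator
        (fun _ => ((2:ℝ≥0∞) ^ (k + 2))⁻¹ / volume (Kset d i0 i1 k)) x
        = ((2:ℝ≥0∞) ^ (k + 2))⁻¹ := by
      intro k
      rw [lintegral_indicator (Kset_meas d i0 i1 k), setLIntegral_const]
      exact ENNReal.div_mul_cancel (Kset_vol_pos d i0 i1 hne k).ne' (Kset_vol_lt_top d i0 i1 k).ne
    rw [tsum_congr heach]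
    have : ∀ k : ℕ, ((2:ℝ≥0∞) ^ (k + 2))⁻¹ = ((2:ℝ≥0∞)⁻¹) ^ k * ((2:ℝ≥0∞)⁻¹) ^ 2 := by
      intro k
      rw [pow_add, ENNReal.mul_inv (Or.inl (pow_ne_zero k (by norm_num)))
        (Or.inr (by norm_num)), ← ENNReal.inv_pow, ← ENNReal.inv_pow]
    rw [tsum_congr this, ENNReal.tsum_mul_right, ENNReal.tsum_geometric]
    rw [ENNReal.one_sub_inv_two, inv_inv, sq, ← mul_assoc,
      ENNReal.mul_inv_cancel (by norm_num) (by norm_num), one_mul]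
  rw [h2]
  exact ENNReal.inv_two_add_inv_two

lemma gden_lower (d : ℕ) (i0 i1 : Fin d) (x : EuclideanSpace ℝ (Fin d))
    (hx : x ∈ closedBall (0 : EuclideanSpace ℝ (Fin d)) 1) :
    (2 * volume (closedBall (0 : EuclideanSpace ℝ (Fin d)) 1))⁻¹ ≤ gden d i0 i1 x := by
  simp only [gden]
  rw [Set.indicator_of_mem hx]
  exact le_self_add

lemma gden_zero (d : ℕ) (i0 i1 : Fin d) (x : EuclideanSpace ℝ (Fin d))
    (hx : x ∉ closedBall (0 : EuclideanSpace ℝ (Fin d)) 1) :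
    gden d i0 i1 x = 0 := by
  simp only [gden]
  rw [Set.indicator_of_notMem hx]
  rw [zero_add]
  have : ∀ k : ℕ, (Kset d i0 i1 k).indicator
      (fun _ => ((2:ℝ≥0∞) ^ (k + 2))⁻¹ / volume (Kset d i0 i1 k)) x = 0 := by
    intro k
    exact Set.indicator_of_notMem (fun hmem => hx (Kset_subset d i0 i1 k hmem)) _
  rw [tsum_congr this, tsum_zero]

lemma gden_lower_spike (d : ℕ) (i0 i1 : Fin d) (k : ℕ) (x : EuclideanSpace ℝ (Fin d))
    (hx : x ∈ Kset d i0 i1 k) :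
    ((2:ℝ≥0∞) ^ (k + 2))⁻¹ / volume (Kset d i0 i1 k) ≤ gden d i0 i1 x := by
  simp only [gden]
  refine le_trans ?_ le_add_self
  refine le_trans ?_ (ENNReal.le_tsum k)
  rw [Set.indicator_of_mem hx]

lemma wedge_dist (d : ℕ) (i0 i1 : Fin d) (hne : i0 ≠ i1) (R δ : ℝ) (hR : 0 < R)
    (hδpos : 0 < δ) (k : ℕ) (hδdef : δ = ((2:ℝ) ^ (k ^ 2))⁻¹)
    (x : EuclideanSpace ℝ (Fin d)) (hx : x ∈ Kset d i0 i1 k) :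
    dist
      (proj2 (EuclideanSpace.single i0 (R/2) + EuclideanSpace.single i1 (R/2*(8*δ))) x)
      (proj2 (EuclideanSpace.single i0 (R/2) - EuclideanSpace.single i1 (R/2*(8*δ))) x)
      = R := by
  set σ : ℝ := 8 * δ with hσdef
  have hσpos : 0 < σ := by positivity
  set a : EuclideanSpace ℝ (Fin d) :=
    EuclideanSpace.single i0 (R/2) + EuclideanSpace.single i1 (R/2*σ) with ha
  set a' : EuclideanSpace ℝ (Fin d) :=
    EuclideanSpace.single i0 (R/2) - EuclideanSpace.single i1 (R/2*σ) with ha'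
  have hinner_a : ∀ y : EuclideanSpace ℝ (Fin d),
      (inner ℝ y a : ℝ) = (R/2) * y i0 + (R/2*σ) * y i1 := by
    intro y
    rw [ha, inner_add_right, EuclideanSpace.inner_single_right,
      EuclideanSpace.inner_single_right]
    simp [mul_comm]
  have hinner_a' : ∀ y : EuclideanSpace ℝ (Fin d),
      (inner ℝ y a' : ℝ) = (R/2) * y i0 - (R/2*σ) * y i1 := by
    intro y
    rw [ha', inner_sub_right, EuclideanSpace.inner_single_right,
      EuclideanSpace.inner_single_right]
    simp [mul_comm]
  obtain ⟨hx0, hx1⟩ := hx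
  have hx0' : |x i0| ≤ δ := by rw [hδdef]; exact hx0
  have haa' : a + a' = EuclideanSpace.single i0 R := by
    ext j
    show a j + a' j = (EuclideanSpace.single i0 R) j
    rw [ha, ha']
    show ((EuclideanSpace.single i0 (R/2)) j + (EuclideanSpace.single i1 (R/2*σ)) j)
      + ((EuclideanSpace.single i0 (R/2)) j - (EuclideanSpace.single i1 (R/2*σ)) j)
      = (EuclideanSpace.single i0 R) j
    simp only [EuclideanSpace.single_apply]
    by_cases hj : j = i0 <;> simp [hj] <;> ring
  have hnaa' : ‖a + a'‖ = R := by
    rw [haa', EuclideanSpace.norm_single, Real.norm_eq_abs, abs_of_pos hR]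
  have hxi0l : -δ ≤ x i0 := (abs_le.mp hx0').1
  have hxi0r : x i0 ≤ δ := (abs_le.mp hx0').2
  rcases hx1 with hmem | hmem
  · -- upper bump : x i1 ≥ 1/4
    have hw1 : (wpt d i1) i1 = 1/2 := by
      rw [wpt, EuclideanSpace.single_apply, if_pos rfl]
    have h14 : (1:ℝ)/4 ≤ x i1 := by
      have h := coord_dist_le x (wpt d i1) i1
      rw [hw1] at h
      rw [mem_closedBall] at hmem
      have habs2 := (abs_le.mp (le_trans h hmem)).1
      norm_num at habs2 ⊢
      linarith
    have hposa : (0:ℝ) < inner ℝ x a := by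
      rw [hinner_a, hσdef]; nlinarith [mul_pos hR hδpos, mul_le_mul_of_nonneg_left hxi0l (by positivity : (0:ℝ) ≤ R/2), mul_le_mul_of_nonneg_left hxi0r (by positivity : (0:ℝ) ≤ R/2), mul_le_mul_of_nonneg_left h14 (by positivity : (0:ℝ) ≤ R/2*(8*δ))]
    have hnega' : ¬ (0:ℝ) < inner ℝ x a' := by
      rw [hinner_a', hσdef]; push_neg; nlinarith [mul_pos hR hδpos, mul_le_mul_of_nonneg_left hxi0l (by positivity : (0:ℝ) ≤ R/2), mul_le_mul_of_nonneg_left hxi0r (by positivity : (0:ℝ) ≤ R/2), mul_le_mul_of_nonneg_left h14 (by positivity : (0:ℝ) ≤ R/2*(8*δ))]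
    have hTx : proj2 a x = a := by
      unfold proj2; rw [if_pos hposa]
    have hSx : proj2 a' x = -a' := by
      unfold proj2; rw [if_neg hnega']
    rw [hTx, hSx, dist_eq_norm, sub_neg_eq_add, hnaa']
  · -- lower bump : x i1 ≤ -1/4
    have hw1 : (-(wpt d i1)) i1 = -(1/2) := by
      show -((wpt d i1) i1) = -(1/2)
      rw [wpt, EuclideanSpace.single_apply, if_pos rfl]
    have h14 : x i1 ≤ -(1/4) := by
      have h := coord_dist_le x (-(wpt d i1)) i1
      rw [hw1] at h
      rw [mem_closedBall] at hmem
      have habs2 := (abs_le.mp (le_trans h hmem)).2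
      norm_num at habs2 ⊢
      linarith
    have hnega : ¬ (0:ℝ) < inner ℝ x a := by
      rw [hinner_a, hσdef]; push_neg; nlinarith [mul_pos hR hδpos, mul_le_mul_of_nonneg_left hxi0l (by positivity : (0:ℝ) ≤ R/2), mul_le_mul_of_nonneg_left hxi0r (by positivity : (0:ℝ) ≤ R/2), mul_le_mul_of_nonneg_left h14 (by positivity : (0:ℝ) ≤ R/2*(8*δ))]
    have hposa' : (0:ℝ) < inner ℝ x a' := by
      rw [hinner_a', hσdef]; nlinarith [mul_pos hR hδpos, mul_le_mul_of_nonneg_left hxi0l (by positivity : (0:ℝ) ≤ R/2), mul_le_mul_of_nonneg_left hxi0r (by positivity : (0:ℝ) ≤ R/2), mul_le_mul_of_nonneg_left h14 (by positivity : (0:ℝ) ≤ R/2*(8*δ))]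
    have hTx : proj2 a x = -a := by
      unfold proj2; rw [if_neg hnega]
    have hSx : proj2 a' x = a' := by
      unfold proj2; rw [if_pos hposa']
    rw [hTx, hSx, dist_eq_norm,
      show -a - a' = -(a + a') by abel, norm_neg, hnaa']

/-- There exists an absolutely continuous probability measure `ρ` on `ℝ^d` (`d ≥ 2`),
supported in the closed unit ball and with density bounded below there by a positive
constant, such that for every `R, C, α > 0` and `p ≥ 1` the quantitative stability
inequality `‖T_μ - T_ν‖_{L²(ρ)} ≤ C W_p(μ,ν)^α` fails for some probability measures
`μ, ν` supported in the closed ball of radius `R`: there are optimal (quadratic-cost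
minimizing) transport maps `T, S` from `ρ` to `μ, ν` and a coupling `π` of `μ` and `ν`
with `∫ |T - S|² dρ > C² (∫ |x-y|^p dπ)^{2α/p}`. -/
theorem stmt10 (d : ℕ) (hd : 2 ≤ d) :
    ∃ (ρ : Measure (EuclideanSpace ℝ (Fin d)))
      (g : EuclideanSpace ℝ (Fin d) → ℝ≥0∞) (m : ℝ≥0∞),
      IsProbabilityMeasure ρ ∧ Measurable g ∧ ρ = volume.withDensity g ∧
      0 < m ∧
      (∀ x ∈ closedBall (0 : EuclideanSpace ℝ (Fin d)) 1, m ≤ g x) ∧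
      (∀ x ∉ closedBall (0 : EuclideanSpace ℝ (Fin d)) 1, g x = 0) ∧
      ∀ R : ℝ, 0 < R → ∀ C : ℝ, 0 < C → ∀ α : ℝ, 0 < α → ∀ p : ℝ, 1 ≤ p →
        ∃ (μ ν : Measure (EuclideanSpace ℝ (Fin d)))
          (T S : EuclideanSpace ℝ (Fin d) → EuclideanSpace ℝ (Fin d))
          (π : Measure (EuclideanSpace ℝ (Fin d) × EuclideanSpace ℝ (Fin d))),
          IsProbabilityMeasure μ ∧ IsProbabilityMeasure ν ∧
          μ (closedBall (0 : EuclideanSpace ℝ (Fin d)) R)ᶜ = 0 ∧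
          ν (closedBall (0 : EuclideanSpace ℝ (Fin d)) R)ᶜ = 0 ∧
          Measurable T ∧ Measurable S ∧
          ρ.map T = μ ∧ ρ.map S = ν ∧
          (∀ T' : EuclideanSpace ℝ (Fin d) → EuclideanSpace ℝ (Fin d),
            Measurable T' → ρ.map T' = μ →
            ∫⁻ x, ENNReal.ofReal (dist x (T x) ^ 2) ∂ρ ≤
              ∫⁻ x, ENNReal.ofReal (dist x (T' x) ^ 2) ∂ρ) ∧
          (∀ S' : EuclideanSpace ℝ (Fin d) → EuclideanSpace ℝ (Fin d),
            Measurable S' → ρ.map S' = ν →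
            ∫⁻ x, ENNReal.ofReal (dist x (S x) ^ 2) ∂ρ ≤
              ∫⁻ x, ENNReal.ofReal (dist x (S' x) ^ 2) ∂ρ) ∧
          IsProbabilityMeasure π ∧ π.fst = μ ∧ π.snd = ν ∧
          ENNReal.ofReal (C ^ 2) *
              (∫⁻ z, ENNReal.ofReal (dist z.1 z.2 ^ p) ∂π) ^ (2 * α / p) <
            ∫⁻ x, ENNReal.ofReal (dist (T x) (S x) ^ 2) ∂ρ := by
  have hd0 : 0 < d := by omega
  set i0 : Fin d := ⟨0, by omega⟩ with hi0
  set i1 : Fin d := ⟨1, by omega⟩ with hi1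
  have hne : i0 ≠ i1 := by simp [hi0, hi1, Fin.ext_iff]
  set g : EuclideanSpace ℝ (Fin d) → ℝ≥0∞ := gden d i0 i1 with hg
  set ρ : Measure (EuclideanSpace ℝ (Fin d)) := volume.withDensity g with hρ
  have hgm : Measurable g := gden_meas d i0 i1
  have hρprob : IsProbabilityMeasure ρ := ⟨by
    rw [hρ, withDensity_apply _ MeasurableSet.univ, Measure.restrict_univ]
    exact gden_integral d i0 i1 hne⟩
  refine ⟨ρ, g, (2 * volume (closedBall (0 : EuclideanSpace ℝ (Fin d)) 1))⁻¹,
    hρprob, hgm, rfl, ?_, fun x hx => gden_lower d i0 i1 x hx,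
    fun x hx => gden_zero d i0 i1 x hx, ?_⟩
  · rw [ENNReal.inv_pos]
    exact ENNReal.mul_ne_top (by norm_num) measure_closedBall_lt_top.ne
  intro R hR C hC α hα p hp
  have hpne : p ≠ 0 := by linarith
  obtain ⟨k, hk2, hkey⟩ := choose_k R C α hR hC hα
  set δ : ℝ := ((2:ℝ) ^ (k ^ 2))⁻¹ with hδdef
  have hδpos : 0 < δ := by positivity
  set σ : ℝ := 8 * δ with hσdef
  have hσpos : 0 < σ := by positivity
  have hσhalf : σ ≤ 1/2 := by
    have h4 : (4:ℕ) ≤ k ^ 2 := by nlinarith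
    have hle : (2:ℝ) ^ (4:ℕ) ≤ (2:ℝ) ^ (k ^ 2) := pow_le_pow_right₀ (by norm_num) h4
    have : δ ≤ ((2:ℝ) ^ (4:ℕ))⁻¹ := by
      rw [hδdef]
      exact inv_anti₀ (by positivity) hle
    rw [hσdef]
    norm_num at this ⊢
    linarith
  -- geometry
  set a : EuclideanSpace ℝ (Fin d) :=
    EuclideanSpace.single i0 (R/2) + EuclideanSpace.single i1 (R/2*σ) with ha
  set a' : EuclideanSpace ℝ (Fin d) :=
    EuclideanSpace.single i0 (R/2) - EuclideanSpace.single i1 (R/2*σ) with ha'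
  have hinner_a : ∀ x : EuclideanSpace ℝ (Fin d),
      (inner ℝ x a : ℝ) = (R/2) * x i0 + (R/2*σ) * x i1 := by
    intro x
    rw [ha, inner_add_right, EuclideanSpace.inner_single_right,
      EuclideanSpace.inner_single_right]
    simp [mul_comm]
  have hinner_a' : ∀ x : EuclideanSpace ℝ (Fin d),
      (inner ℝ x a' : ℝ) = (R/2) * x i0 - (R/2*σ) * x i1 := by
    intro x
    rw [ha', inner_sub_right, EuclideanSpace.inner_single_right,
      EuclideanSpace.inner_single_right]
    simp [mul_comm]
  have hna : ‖a‖ ≤ R := by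
    rw [ha]
    calc ‖EuclideanSpace.single i0 (R/2) + EuclideanSpace.single i1 (R/2*σ)‖
        ≤ ‖EuclideanSpace.single i0 (R/2)‖ + ‖EuclideanSpace.single i1 (R/2*σ)‖ :=
          norm_add_le _ _
      _ = |R/2| + |R/2*σ| := by
          rw [EuclideanSpace.norm_single, EuclideanSpace.norm_single, Real.norm_eq_abs,
            Real.norm_eq_abs]
      _ ≤ R := by
          rw [abs_of_pos (by positivity), abs_of_pos (by positivity)]
          nlinarith
  have hna' : ‖a'‖ ≤ R := by
    rw [ha']
    calc ‖EuclideanSpace.single i0 (R/2) - EuclideanSpace.single i1 (R/2*σ)‖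
        ≤ ‖EuclideanSpace.single i0 (R/2)‖ + ‖EuclideanSpace.single i1 (R/2*σ)‖ :=
          norm_sub_le _ _
      _ = |R/2| + |R/2*σ| := by
          rw [EuclideanSpace.norm_single, EuclideanSpace.norm_single, Real.norm_eq_abs,
            Real.norm_eq_abs]
      _ ≤ R := by
          rw [abs_of_pos (by positivity), abs_of_pos (by positivity)]
          nlinarith
  set T : EuclideanSpace ℝ (Fin d) → EuclideanSpace ℝ (Fin d) := proj2 a with hT
  set S : EuclideanSpace ℝ (Fin d) → EuclideanSpace ℝ (Fin d) := proj2 a' with hS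
  have hTm : Measurable T := proj2_measurable a
  have hSm : Measurable S := proj2_measurable a'
  set μ : Measure (EuclideanSpace ℝ (Fin d)) := ρ.map T with hμ
  set ν : Measure (EuclideanSpace ℝ (Fin d)) := ρ.map S with hν
  have hμprob : IsProbabilityMeasure μ := Measure.isProbabilityMeasure_map hTm.aemeasurable
  have hνprob : IsProbabilityMeasure ν := Measure.isProbabilityMeasure_map hSm.aemeasurable
  have hTrange : ∀ x, T x = a ∨ T x = -a := by
    intro x; rw [hT]; unfold proj2; split_ifs <;> simp
  have hSrange : ∀ x, S x = a' ∨ S x = -a' := by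
    intro x; rw [hS]; unfold proj2; split_ifs <;> simp
  have hμsupp : μ (closedBall (0 : EuclideanSpace ℝ (Fin d)) R)ᶜ = 0 := by
    rw [hμ, Measure.map_apply hTm measurableSet_closedBall.compl]
    have : T ⁻¹' (closedBall (0 : EuclideanSpace ℝ (Fin d)) R)ᶜ = ∅ := by
      rw [Set.eq_empty_iff_forall_notMem]
      intro x hx
      apply hx
      rcases hTrange x with h | h <;> rw [h] <;>
        simp [mem_closedBall, dist_zero_right, norm_neg, hna]
    rw [this, measure_empty]
  have hνsupp : ν (closedBall (0 : EuclideanSpace ℝ (Fin d)) R)ᶜ = 0 := by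
    rw [hν, Measure.map_apply hSm measurableSet_closedBall.compl]
    have : S ⁻¹' (closedBall (0 : EuclideanSpace ℝ (Fin d)) R)ᶜ = ∅ := by
      rw [Set.eq_empty_iff_forall_notMem]
      intro x hx
      apply hx
      rcases hSrange x with h | h <;> rw [h] <;>
        simp [mem_closedBall, dist_zero_right, norm_neg, hna']
    rw [this, measure_empty]
  -- the reflection
  have hιm : Measurable (⇑(refl1 d i1)) := (refl1 d i1).continuous.measurable
  have hιw : refl1 d i1 (wpt d i1) = -(wpt d i1) := by
    ext j
    rw [refl1_apply]
    by_cases hj : j = i1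
    · subst hj; simp
    · simp [wpt, EuclideanSpace.single_apply, hj]
  have hιa : refl1 d i1 a = a' := by
    ext j
    rw [refl1_apply]
    have haj : a j = (if j = i0 then R/2 else 0) + (if j = i1 then R/2*σ else 0) := by
      show (EuclideanSpace.single i0 (R/2)) j + (EuclideanSpace.single i1 (R/2*σ)) j = _
      rw [EuclideanSpace.single_apply, EuclideanSpace.single_apply]
    have haj' : a' j = (if j = i0 then R/2 else 0) - (if j = i1 then R/2*σ else 0) := by
      show (EuclideanSpace.single i0 (R/2)) j - (EuclideanSpace.single i1 (R/2*σ)) j = _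
      rw [EuclideanSpace.single_apply, EuclideanSpace.single_apply]
    by_cases hj : j = i1
    · have hj0 : j ≠ i0 := by rw [hj]; exact Ne.symm hne
      rw [if_pos hj, haj, haj']
      simp only [if_neg hj0, if_pos hj]
      ring
    · rw [if_neg hj, haj, haj']
      simp only [if_neg hj]
      ring
  have hginv : ∀ x, g (refl1 d i1 x) = g x := by
    intro x
    rw [hg]
    simp only [gden]
    congr 1
    · have h1 : (refl1 d i1 x ∈ closedBall (0 : EuclideanSpace ℝ (Fin d)) 1)
          ↔ (x ∈ closedBall (0 : EuclideanSpace ℝ (Fin d)) 1) := by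
        rw [mem_closedBall_zero_iff, mem_closedBall_zero_iff,
          (refl1 d i1).norm_map]
      by_cases hx : x ∈ closedBall (0 : EuclideanSpace ℝ (Fin d)) 1
      · rw [Set.indicator_of_mem (h1.mpr hx), Set.indicator_of_mem hx]
      · rw [Set.indicator_of_notMem (fun h => hx (h1.mp h)),
          Set.indicator_of_notMem hx]
    · refine tsum_congr fun k => ?_
      have hd1 : dist (refl1 d i1 x) (wpt d i1) = dist x (-(wpt d i1)) := by
        conv_lhs => rw [show wpt d i1 = refl1 d i1 (-(wpt d i1)) by
          rw [map_neg, hιw, neg_neg]]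
        exact (refl1 d i1).dist_map x (-(wpt d i1))
      have hd2 : dist (refl1 d i1 x) (-(wpt d i1)) = dist x (wpt d i1) := by
        conv_lhs => rw [show -(wpt d i1) = refl1 d i1 (wpt d i1) from hιw.symm]
        exact (refl1 d i1).dist_map x (wpt d i1)
      have hcoord : (refl1 d i1 x) i0 = x i0 := by
        rw [refl1_apply, if_neg hne]
      have hmem : (refl1 d i1 x ∈ Kset d i0 i1 k) ↔ (x ∈ Kset d i0 i1 k) := by
        simp only [Kset, Set.mem_inter_iff, Set.mem_setOf_eq, Set.mem_union,
          mem_closedBall, hd1, hd2, hcoord]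
        tauto
      by_cases hx : x ∈ Kset d i0 i1 k
      · rw [Set.indicator_of_mem (hmem.mpr hx), Set.indicator_of_mem hx]
      · rw [Set.indicator_of_notMem (fun h => hx (hmem.mp h)),
          Set.indicator_of_notMem hx]
  have hmapι : ρ.map (⇑(refl1 d i1)) = ρ := by
    ext s hs
    rw [Measure.map_apply hιm hs, hρ, withDensity_apply _ (hιm hs),
      withDensity_apply _ hs, ← lintegral_indicator (hιm hs), ← lintegral_indicator hs]
    have hcongr : ∀ x, ((⇑(refl1 d i1)) ⁻¹' s).indicator g x
        = s.indicator g (refl1 d i1 x) := by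
      intro x
      by_cases hx : refl1 d i1 x ∈ s
      · rw [Set.indicator_of_mem hx, Set.indicator_of_mem (by exact hx), hginv x]
      · rw [Set.indicator_of_notMem (by exact hx), Set.indicator_of_notMem hx]
    rw [lintegral_congr hcongr]
    exact ((refl1 d i1).measurePreserving).lintegral_comp (hgm.indicator hs)
  have hcomm : ∀ x, refl1 d i1 (T x) = S (refl1 d i1 x) := by
    intro x
    have hiι : (inner ℝ (refl1 d i1 x) a' : ℝ) = (inner ℝ x a : ℝ) := by
      rw [hinner_a', hinner_a, refl1_apply, refl1_apply, if_neg hne, if_pos rfl]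
      ring
    rw [hT, hS]
    unfold proj2
    rw [hiι]
    split_ifs with h
    · exact hιa
    · rw [map_neg, hιa]
  have hνmap : μ.map (⇑(refl1 d i1)) = ν := by
    rw [hμ, Measure.map_map hιm hTm,
      show (⇑(refl1 d i1)) ∘ T = S ∘ (⇑(refl1 d i1)) from funext hcomm,
      ← Measure.map_map hSm hιm, hmapι, hν]
  set π : Measure (EuclideanSpace ℝ (Fin d) × EuclideanSpace ℝ (Fin d)) :=
    μ.map (fun y => (y, refl1 d i1 y)) with hπ
  have hpairm : Measurable fun y : EuclideanSpace ℝ (Fin d) => (y, refl1 d i1 y) :=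
    measurable_id.prodMk hιm
  have hπprob : IsProbabilityMeasure π := Measure.isProbabilityMeasure_map hpairm.aemeasurable
  have hπfst : π.fst = μ := by
    rw [hπ, Measure.fst, Measure.map_map measurable_fst hpairm]
    exact Measure.map_id
  have hπsnd : π.snd = ν := by
    rw [hπ, Measure.snd, Measure.map_map measurable_snd hpairm]
    exact hνmap
  -- cost of the coupling
  have hμae : ∀ᵐ y ∂μ, y = a ∨ y = -a := by
    rw [ae_iff]
    have hms : MeasurableSet ({a, -a}ᶜ : Set (EuclideanSpace ℝ (Fin d))) :=
      ((measurableSet_singleton (-a)).insert a).compl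
    have : {y : EuclideanSpace ℝ (Fin d) | ¬(y = a ∨ y = -a)} = {a, -a}ᶜ := by
      ext y; simp
    rw [this, hμ, Measure.map_apply hTm hms]
    have : T ⁻¹' ({a, -a}ᶜ : Set (EuclideanSpace ℝ (Fin d))) = ∅ := by
      rw [Set.eq_empty_iff_forall_notMem]
      intro x hx
      apply hx
      rcases hTrange x with h | h <;> simp [h]
    rw [this, measure_empty]
  have hdiff : a - a' = EuclideanSpace.single i1 (R*σ) := by
    ext j
    show a j - a' j = (EuclideanSpace.single i1 (R*σ)) j
    rw [ha, ha']
    show ((EuclideanSpace.single i0 (R/2)) j + (EuclideanSpace.single i1 (R/2*σ)) j)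
      - ((EuclideanSpace.single i0 (R/2)) j - (EuclideanSpace.single i1 (R/2*σ)) j)
      = (EuclideanSpace.single i1 (R*σ)) j
    simp only [EuclideanSpace.single_apply]
    by_cases hj : j = i1 <;> simp [hj] <;> ring
  have hdaa' : dist a a' = R * σ := by
    rw [dist_eq_norm, hdiff, EuclideanSpace.norm_single, Real.norm_eq_abs,
      abs_of_pos (by positivity)]
  have hcost : ∫⁻ z, ENNReal.ofReal (dist z.1 z.2 ^ p) ∂π
      = ENNReal.ofReal ((R*σ) ^ p) := by
    have hfm : Measurable fun z : EuclideanSpace ℝ (Fin d) × EuclideanSpace ℝ (Fin d) =>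
        ENNReal.ofReal (dist z.1 z.2 ^ p) := by
      apply ENNReal.measurable_ofReal.comp
      exact ((continuous_fst.dist continuous_snd).rpow_const
        (fun x => Or.inr (by linarith))).measurable
    rw [hπ, lintegral_map hfm hpairm]
    have hae : ∀ᵐ y ∂μ, ENNReal.ofReal (dist y (refl1 d i1 y) ^ p)
        = ENNReal.ofReal ((R*σ) ^ p) := by
      filter_upwards [hμae] with y hy
      rcases hy with rfl | rfl
      · rw [hιa, hdaa']
      · rw [map_neg, hιa, dist_neg_neg, hdaa']
    rw [lintegral_congr_ae hae, lintegral_const, measure_univ, mul_one]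
  -- lower bound for the map discrepancy
  have hdistTS : ∀ x ∈ Kset d i0 i1 k, dist (T x) (S x) = R := fun x hx =>
    wedge_dist d i0 i1 hne R δ hR hδpos k hδdef x hx
  have hρK : ((2:ℝ≥0∞) ^ (k + 2))⁻¹ ≤ ρ (Kset d i0 i1 k) := by
    rw [hρ, withDensity_apply _ (Kset_meas d i0 i1 k)]
    have h1 : ((2:ℝ≥0∞) ^ (k + 2))⁻¹
        = ∫⁻ _x in Kset d i0 i1 k,
            ((2:ℝ≥0∞) ^ (k + 2))⁻¹ / volume (Kset d i0 i1 k) ∂volume := by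
      rw [setLIntegral_const]
      exact (ENNReal.div_mul_cancel (Kset_vol_pos d i0 i1 hne k).ne'
        (Kset_vol_lt_top d i0 i1 k).ne).symm
    rw [h1]
    refine setLIntegral_mono hgm fun x hx => ?_
    exact gden_lower_spike d i0 i1 k x hx
  have hRHS : ENNReal.ofReal (R ^ 2) * ((2:ℝ≥0∞) ^ (k + 2))⁻¹
      ≤ ∫⁻ x, ENNReal.ofReal (dist (T x) (S x) ^ 2) ∂ρ := by
    calc ENNReal.ofReal (R ^ 2) * ((2:ℝ≥0∞) ^ (k + 2))⁻¹
        ≤ ENNReal.ofReal (R ^ 2) * ρ (Kset d i0 i1 k) := mul_le_mul_right hρK _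
      _ = ∫⁻ _x in Kset d i0 i1 k, ENNReal.ofReal (R ^ 2) ∂ρ := by
          rw [setLIntegral_const]
      _ = ∫⁻ x in Kset d i0 i1 k, ENNReal.ofReal (dist (T x) (S x) ^ 2) ∂ρ := by
          refine (setLIntegral_congr_fun (Kset_meas d i0 i1 k)
            (fun x hx => ?_)).symm
          rw [hdistTS x hx]
      _ ≤ ∫⁻ x, ENNReal.ofReal (dist (T x) (S x) ^ 2) ∂ρ :=
          setLIntegral_le_lintegral _ _
  -- final inequality
  have hRσpos : 0 < R * σ := by positivity
  have harith : p * (2 * α / p) = 2 * α := by field_simp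
  have hpow : (ENNReal.ofReal ((R*σ) ^ p)) ^ (2 * α / p)
      = ENNReal.ofReal ((R*σ) ^ (2*α)) := by
    rw [ENNReal.ofReal_rpow_of_pos (Real.rpow_pos_of_pos hRσpos p),
      ← Real.rpow_mul hRσpos.le, harith]
  have h2k : ((2:ℝ≥0∞) ^ (k + 2))⁻¹ = ENNReal.ofReal (((2:ℝ) ^ (k + 2))⁻¹) := by
    rw [ENNReal.ofReal_inv_of_pos (by positivity),
      ENNReal.ofReal_pow (by norm_num : (0:ℝ) ≤ 2)]
    norm_num
  refine ⟨μ, ν, T, S, π, hμprob, hνprob, hμsupp, hνsupp, hTm, hSm, rfl, rfl,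
    fun T' hT' h => proj2_opt ρ a T' hT' h,
    fun S' hS' h => proj2_opt ρ a' S' hS' h,
    hπprob, hπfst, hπsnd, ?_⟩
  calc ENNReal.ofReal (C ^ 2) * (∫⁻ z, ENNReal.ofReal (dist z.1 z.2 ^ p) ∂π) ^ (2 * α / p)
      = ENNReal.ofReal (C ^ 2 * (R*σ) ^ (2*α)) := by
        rw [hcost, hpow, ← ENNReal.ofReal_mul (by positivity)]
    _ < ENNReal.ofReal (R ^ 2 * ((2:ℝ) ^ (k + 2))⁻¹) := by
        rw [ENNReal.ofReal_lt_ofReal_iff (by positivity)]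
        exact hkey
    _ = ENNReal.ofReal (R ^ 2) * ((2:ℝ≥0∞) ^ (k + 2))⁻¹ := by
        rw [ENNReal.ofReal_mul (by positivity), h2k]
    _ ≤ ∫⁻ x, ENNReal.ofReal (dist (T x) (S x) ^ 2) ∂ρ := hRHS
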